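/- Work in ℤ[α^{±1}], the ring of Laurent polynomials with integer coefficients, with α the variable; for an integer a write (−α)^a := (−1)^a·α^a, a unit of this ring. Let g ∈ ℤ[α^{±1}] be a non-unit, let h ∈ ℤ[α^{±1}] be arbitrary, and let a, b be integers. Set P := (−α)^a·h·g and Q := (−α)^b·g². Then −α + (α+1)·(α² − (α²−1)P)·(α² − (α²−1)Q) ≠ α² − (α²−1)·(α − (α+1)P)·(α − (α+1)Q). -/
import Mathlib


open LaurentPolynomial

/-- The unit `(−α)^a = (−1)^a · α^a` of the Laurent polynomial ring `ℤ[α^{±1}]`,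
where `α = T 1` and `α^a = T a` for `a : ℤ`. -/
noncomputable def negAlphaPow (a : ℤ) : LaurentPolynomial ℤ :=
  (((-1) ^ a : ℤˣ) : ℤ) • T a

/-- In `ℤ[α^{±1}]` (with `α := T 1`): if `g` is a non-unit, `h` is arbitrary,
`a, b : ℤ`, and `P := (−α)^a·h·g`, `Q := (−α)^b·g²`, then
`−α + (α+1)(α² − (α²−1)P)(α² − (α²−1)Q) ≠ α² − (α²−1)(α − (α+1)P)(α − (α+1)Q)`. -/
theorem gamma_KB_ne_gamma_KG (g h : LaurentPolynomial ℤ) (hg : ¬ IsUnit g)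
    (a b : ℤ) (α P Q : LaurentPolynomial ℤ)
    (hα : α = T 1)
    (hP : P = negAlphaPow a * h * g)
    (hQ : Q = negAlphaPow b * g ^ 2) :
    -α + (α + 1) * (α ^ 2 - (α ^ 2 - 1) * P) * (α ^ 2 - (α ^ 2 - 1) * Q)
      ≠ α ^ 2 - (α ^ 2 - 1) * (α - (α + 1) * P) * (α - (α + 1) * Q) := by
  intro heq
  -- The difference of the two sides factors as α(α−1)(α+1)³(1−P)(1−Q).
  have key : α * (α - 1) * (α + 1) ^ 3 * ((1 - P) * (1 - Q)) = 0 := by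
    linear_combination heq
  -- The factors α, α−1, α+1 are nonzero in the domain ℤ[α^{±1}].
  have hα0 : α ≠ 0 := by rw [hα]; exact (isUnit_T 1).ne_zero
  have poly_ne : ∀ p : Polynomial ℤ, Polynomial.eval 0 p ≠ 0 →
      Polynomial.toLaurent p ≠ 0 := by
    intro p hp h0
    rw [Polynomial.toLaurent_eq_zero] at h0
    rw [h0] at hp
    simp at hp
  have hαm1 : α - 1 ≠ 0 := by
    rw [hα]
    have := poly_ne (Polynomial.X - 1) (by simp)
    simpa [Polynomial.toLaurent_X] using this
  have hαp1 : α + 1 ≠ 0 := by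
    rw [hα]
    have := poly_ne (Polynomial.X + 1) (by simp)
    simpa [Polynomial.toLaurent_X] using this
  -- Hence (1−P)(1−Q) = 0, so P = 1 or Q = 1; either way g is a unit.
  rcases mul_eq_zero.mp key with h1 | h1
  · rcases mul_eq_zero.mp h1 with h2 | h2
    · rcases mul_eq_zero.mp h2 with h3 | h3
      · exact hα0 h3
      · exact hαm1 h3
    · exact hαp1 (pow_eq_zero_iff (by norm_num) |>.mp h2)
  · rcases mul_eq_zero.mp h1 with h2 | h2
    · apply hg
      refine isUnit_of_mul_isUnit_left (y := negAlphaPow a * h) ?_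
      rw [show g * (negAlphaPow a * h) = P by rw [hP]; ring,
        show P = 1 by linear_combination -h2]
      exact isUnit_one
    · apply hg
      refine isUnit_of_mul_isUnit_left (y := negAlphaPow b * g) ?_
      rw [show g * (negAlphaPow b * g) = Q by rw [hQ]; ring,
        show Q = 1 by linear_combination -h2]
      exact isUnit_one
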